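/- arXiv:1604.07986 — 2 statements merged into one kernel-verified Lean document; each statement's English description precedes it below -/
import Mathlib

section
/- Let G be an infinite abelian group, let T = D_1 × ⋯ × D_n be a finite product of reduced seminormal finitely primary monoids, let ι : T → G be a monoid homomorphism, and let B = B(G, T, ι) = {S·t ∈ F(G) × T : σ(S) + ι(t) = 0} be the T-block monoid. Then Δ(B) = ℕ. -/
namespace ArXivSeminormal

attribute [local instance] Classical.propDecidable

noncomputable section

/-! ### Generic factorization theory in commutative monoids -/

variable {M : Type*} [CommMonoid M]

/-- The set of factorizations of `a` (in the sense of `Z(a)`): multisets of irreducible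
elements of the reduced monoid (modelled by `Associates M`) whose product is the class
of `a`. -/
def Factorizations (a : M) : Set (Multiset (Associates M)) :=
  {z | (∀ x ∈ z, Irreducible x) ∧ z.prod = Associates.mk a}

/-- The set of lengths `L(a)` of an element `a`. -/
def lengthSet (a : M) : Set ℕ :=
  {k | ∃ z ∈ Factorizations a, Multiset.card z = k}

/-- The set of (successive) distances `Δ(L)` of a set `L ⊆ ℕ`. -/
def DeltaSet (L : Set ℕ) : Set ℕ :=
  {d | ∃ k l, k ∈ L ∧ l ∈ L ∧ k < l ∧ (∀ m, k < m → m < l → m ∉ L) ∧ d = l - k}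

/-- The set of distances `Δ(H)` of a monoid `H`. -/
def DeltaMonoid (M : Type*) [CommMonoid M] : Set ℕ :=
  ⋃ a : M, DeltaSet (lengthSet a)

/-- The distance between two factorizations:
`d(z,z') = max (card (z - gcd z z')) (card (z' - gcd z z'))`. -/
def factorDist (z z' : Multiset (Associates M)) : ℕ :=
  max (Multiset.card (z - z')) (Multiset.card (z' - z))

/-- The catenary degree `c(H)` of a monoid `H`: the smallest `N ∈ ℕ∞` such that any two
factorizations of any element are connected by a chain of factorizations with consecutive
distances at most `N`. -/
def catenaryDegree (M : Type*) [CommMonoid M] : ℕ∞ :=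
  sInf {N : ℕ∞ | ∀ (a : M), ∀ z ∈ Factorizations a, ∀ z' ∈ Factorizations a,
    ∃ c : List (Multiset (Associates M)), c.head? = some z ∧ c.getLast? = some z' ∧
      (∀ w ∈ c, w ∈ Factorizations a) ∧
      List.Chain' (fun u v => (factorDist u v : ℕ∞) ≤ N) c}

/-- A monoid is factorial if every element has a unique factorization. -/
def IsFactorialMonoid (M : Type*) [CommMonoid M] : Prop :=
  ∀ a : M, ∃! z : Multiset (Associates M), z ∈ Factorizations a

/-! ### Free commutative monoids, block monoids, Davenport constant -/

/-- The free abelian (multiplicatively written) monoid on a set `P`. -/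
abbrev FreeCM (P : Type*) := Multiplicative (Multiset P)

/-- The sum homomorphism `σ : F(G) → G`. -/
def sigmaHom (G : Type*) [AddCommMonoid G] : FreeCM G →* Multiplicative G :=
  AddMonoidHom.toMultiplicative
    { toFun := Multiset.sum
      map_zero' := Multiset.sum_zero
      map_add' := Multiset.sum_add }

/-- The monoid of zero-sum sequences over `G`. -/
def BlockMonoid (G : Type*) [AddCommMonoid G] : Submonoid (FreeCM G) :=
  MonoidHom.mker (sigmaHom G)

/-- The Davenport constant of `G`: the supremum of lengths of minimal zero-sum sequences. -/
def Davenport (G : Type*) [AddCommMonoid G] : ℕ :=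
  sSup {k | ∃ u : BlockMonoid G, Irreducible u ∧
    Multiset.card (Multiplicative.toAdd (u : FreeCM G)) = k}

/-! ### Reduced seminormal finitely primary monoids -/

/-- The `Fin s →₀ ℕ` function with all values `1`, i.e. the exponent vector of
`q_1 ⋯ q_s`. -/
def allOnes (s : ℕ) : Fin s →₀ ℕ := Finsupp.equivFunOnFinite.symm fun _ => 1

/-- The reduced seminormal finitely primary monoid of rank `s` with unit group `U` of the
complete integral closure:
`D = {ε q_1^{k_1} ⋯ q_s^{k_s} : ε ∈ U, all k_j ≥ 1} ∪ {1} ⊆ U × [q_1,…,q_s]`. -/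
def seminormalD (U : Type*) [CommGroup U] (s : ℕ) :
    Submonoid (U × Multiplicative (Fin s →₀ ℕ)) where
  carrier := {x | x = 1 ∨ ∀ j, 1 ≤ Multiplicative.toAdd x.2 j}
  one_mem' := Or.inl rfl
  mul_mem' := by
    rintro a b (rfl | ha) (rfl | hb)
    · exact Or.inl (mul_one 1)
    · rw [Set.mem_setOf_eq, one_mul]; exact Or.inr hb
    · rw [Set.mem_setOf_eq, mul_one]; exact Or.inr ha
    · refine Or.inr fun j => ?_
      have h1 := ha j
      have h2 := hb j
      have h3 : Multiplicative.toAdd ((a * b).2) j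
          = Multiplicative.toAdd a.2 j + Multiplicative.toAdd b.2 j := rfl
      omega

/-! ### T-block monoids (Setting (S)) -/

/-- The monoid `T = D_1 × ⋯ × D_n`. -/
abbrev Tm {n : ℕ} (U : Fin n → Type*) [∀ i, CommGroup (U i)] (s : Fin n → ℕ) :=
  ∀ i, ↥(seminormalD (U i) (s i))

/-- The monoid `D̂_1 × ⋯ × D̂_n`. -/
abbrev HatTm {n : ℕ} (U : Fin n → Type*) [∀ i, CommGroup (U i)] (s : Fin n → ℕ) :=
  ∀ i, U i × Multiplicative (Fin (s i) →₀ ℕ)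

/-- The monoid `F = F(G) × T`. -/
abbrev Fm (G : Type*) {n : ℕ} (U : Fin n → Type*) [∀ i, CommGroup (U i)] (s : Fin n → ℕ) :=
  FreeCM G × Tm U s

/-- The homomorphism `F → G`, `S·t ↦ σ(S) + ι(t)`, whose kernel is the `T`-block monoid;
it computes the class `[a] ∈ G ≅ q(F)/q(B)` of `a ∈ F`. -/
def TBlockPhi (G : Type*) [AddCommGroup G] {n : ℕ} (U : Fin n → Type*) [∀ i, CommGroup (U i)]
    (s : Fin n → ℕ) (iota : Tm U s →* Multiplicative G) : Fm G U s →* Multiplicative G :=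
  ((sigmaHom G).comp (MonoidHom.fst _ _)) * (iota.comp (MonoidHom.snd _ _))

/-- The `T`-block monoid `B = B(G, T, ι) = {S·t ∈ F(G) × T : σ(S) + ι(t) = 0}`. -/
def TBlock (G : Type*) [AddCommGroup G] {n : ℕ} (U : Fin n → Type*) [∀ i, CommGroup (U i)]
    (s : Fin n → ℕ) (iota : Tm U s →* Multiplicative G) : Submonoid (Fm G U s) :=
  MonoidHom.mker (TBlockPhi G U s iota)

/-- The inclusion `T = D_1 × ⋯ × D_n → D̂_1 × ⋯ × D̂_n`. -/
def embedT {n : ℕ} (U : Fin n → Type*) [∀ i, CommGroup (U i)] (s : Fin n → ℕ) :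
    Tm U s →* HatTm U s :=
  Pi.monoidHom fun i => (seminormalD (U i) (s i)).subtype.comp
    (Pi.evalMonoidHom (fun j => ↥(seminormalD (U j) (s j))) i)

/-- The norm `‖A‖ = k + 2·Σ_i max L_{D_i}(a_i)` of `A = g_1⋯g_k a_1⋯a_n ∈ F`. -/
def normF (G : Type*) {n : ℕ} (U : Fin n → Type*) [∀ i, CommGroup (U i)] (s : Fin n → ℕ)
    (A : Fm G U s) : ℕ :=
  Multiset.card (Multiplicative.toAdd A.1) + 2 * ∑ i, sSup (lengthSet (A.2 i))

/-- The class `[ε] ∈ G` of a unit `ε ∈ D̂_ν^×`. -/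
def classOfUnit {G : Type*} [AddCommGroup G] {n : ℕ} (U : Fin n → Type*)
    [∀ i, CommGroup (U i)] (s : Fin n → ℕ) (iotahat : HatTm U s →* Multiplicative G)
    (ν : Fin n) (ε : U ν) : Multiplicative G :=
  iotahat (Pi.mulSingle ν (ε, 1))

/-- The class `[q_{ν,j}] ∈ G` of the prime `q_{ν,j}` of `D̂_ν`. -/
def classOfPrime {G : Type*} [AddCommGroup G] {n : ℕ} (U : Fin n → Type*)
    [∀ i, CommGroup (U i)] (s : Fin n → ℕ) (iotahat : HatTm U s →* Multiplicative G)
    (ν : Fin n) (j : Fin (s ν)) : Multiplicative G :=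
  iotahat (Pi.mulSingle ν (1, Multiplicative.ofAdd (Finsupp.single j 1)))

/-- The quantity `d_ν ∈ {-1, 0, 1, 2}` from Theorem 3.3 (for `G = {0, e}` of order two). -/
def dval {G : Type*} [AddCommGroup G] {n : ℕ} (U : Fin n → Type*) [∀ i, CommGroup (U i)]
    (s : Fin n → ℕ) (iotahat : HatTm U s →* Multiplicative G) (e : G) (ν : Fin n) : ℤ :=
  if (∀ ε : U ν, classOfUnit U s iotahat ν ε = 1) ∧ s ν = 2 ∧
      (Finset.univ.filter fun j : Fin (s ν) =>
        classOfPrime U s iotahat ν j = Multiplicative.ofAdd e).card = 2 then 2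
  else if (∀ ε : U ν, classOfUnit U s iotahat ν ε = 1) ∧ s ν = 1 then 0
  else if (∀ ε : U ν, classOfUnit U s iotahat ν ε = 1) ∧ 2 ≤ s ν ∧
      (Finset.univ.filter fun j : Fin (s ν) =>
        classOfPrime U s iotahat ν j = Multiplicative.ofAdd e).card = 0 then -1
  else 1


/-!
Fix `d ≥ 1` and put `K = d + 2`. An infinite abelian group contains `z₁, …, z_K` with
`∑ zᵢ = 0` such that every relation `∑ cᵢ zᵢ = 0` with all `cᵢ ∈ {-1, 0, 1}` is trivial or has
all `cᵢ ≠ 0`. Then an atom dividing `S₀ = ∏ zᵢ (-zᵢ)` is either a pair `zᵢ (-zᵢ)` or takes one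
of `±zᵢ` for every `i`, and counting terms shows that `S₀` factors either into the `K` pairs or
into two atoms of the second kind: `L(S₀) = {2, K}`. As `T` is reduced, `B(G)` is a
divisor-closed submonoid of `B(G, T, ι)`, so `S₀` has the same lengths there and `d ∈ Δ(B)`.
-/

section MultisetLemmas

variable {α β : Type*}

theorem Multiset.exists_le_map_eq_of_le_map {f : α → β} {t : Multiset α} {B : Multiset β}
    (h : B ≤ t.map f) : ∃ B' ≤ t, B'.map f = B := by
  induction t using Multiset.induction_on generalizing B with
  | empty =>
    rw [Multiset.map_zero, Multiset.le_zero] at h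
    exact ⟨0, le_rfl, h.symm⟩
  | cons a t ih =>
    rw [Multiset.map_cons] at h
    by_cases ha : f a ∈ B
    · obtain ⟨B', hB't, hB'⟩ := ih (Multiset.erase_le_iff_le_cons.2 h)
      exact ⟨a ::ₘ B', Multiset.cons_le_cons a hB't, by
        rw [Multiset.map_cons, hB', Multiset.cons_erase ha]⟩
    · obtain ⟨B', hB't, hB'⟩ := ih ((Multiset.le_cons_of_notMem ha).1 h)
      exact ⟨B', hB't.trans (Multiset.le_cons_self t a), hB'⟩

theorem Multiset.exists_sum_eq_map_eq_of_sum_eq_map {f : α → β} {P : Multiset (Multiset β)}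
    {t : Multiset α} (h : P.sum = t.map f) :
    ∃ P' : Multiset (Multiset α), P'.sum = t ∧ P'.map (Multiset.map f) = P := by
  induction P using Multiset.induction_on generalizing t with
  | empty => exact ⟨0, by simpa [eq_comm] using h, rfl⟩
  | cons B P ih =>
    rw [Multiset.sum_cons] at h
    obtain ⟨B', hB't, hB'⟩ :=
      Multiset.exists_le_map_eq_of_le_map (h ▸ Multiset.le_add_right B P.sum)
    obtain ⟨R, rfl⟩ := Multiset.le_iff_exists_add.1 hB't
    rw [Multiset.map_add, hB', add_right_inj] at h
    obtain ⟨P', rfl, rfl⟩ := ih h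
    exact ⟨B' ::ₘ P', Multiset.sum_cons _ _, by rw [Multiset.map_cons, hB']⟩

theorem Multiset.sum_map_eq_sum_count [Fintype α] [DecidableEq α] {A : Type*}
    [AddCommMonoid A] (J : Multiset α) (f : α → A) :
    (J.map f).sum = ∑ a, J.count a • f a := by
  rw [Finset.sum_multiset_map_count]
  exact Finset.sum_subset (Finset.subset_univ _) fun a _ ha => by
    rw [Multiset.count_eq_zero.2 (by simpa using ha), zero_smul]

theorem card_eq_two_or_eq_of_sum_map_eq {K : ℕ} (P : Multiset α) (f g : α → ℕ)
    (hP : ∀ x ∈ P, (f x = 2 ∧ (g x = 0 ∨ g x = 2)) ∨ (f x = K ∧ g x = 1))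
    (hf : (P.map f).sum = 2 * K) (hg : (P.map g).sum = 2) :
    Multiset.card P = 2 ∨ Multiset.card P = K := by
  obtain ⟨a, b, c, hcard, hfsum, hgsum⟩ : ∃ a b c, Multiset.card P = a + b + c ∧
      (P.map f).sum = 2 * a + 2 * b + K * c ∧ (P.map g).sum = 2 * b + c := by
    clear hf hg
    induction P using Multiset.induction_on with
    | empty => exact ⟨0, 0, 0, by simp⟩
    | cons x P ih =>
      obtain ⟨a, b, c, h₁, h₂, h₃⟩ := ih fun y hy => hP y (Multiset.mem_cons_of_mem hy)
      simp only [Multiset.card_cons, Multiset.map_cons, Multiset.sum_cons, h₁, h₂, h₃]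
      rcases hP x (Multiset.mem_cons_self x P) with ⟨hf, hg | hg⟩ | ⟨hf, hg⟩ <;> rw [hf, hg]
      · exact ⟨a + 1, b, c, by ring, by ring, by ring⟩
      · exact ⟨a, b + 1, c, by ring, by ring, by ring⟩
      · exact ⟨a, b, c + 1, by ring, by ring, by ring⟩
  have hc : c ≤ 2 := by omega
  interval_cases c <;> omega

end MultisetLemmas

section Factorization

variable {N : Type*} [CommMonoid N]

theorem subsingleton_units_of_injective [Subsingleton Nˣ] {f : M →* N}
    (hf : Function.Injective f) : Subsingleton Mˣ :=
  ⟨fun u v => Units.ext <| hf <|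
    congrArg Units.val (Subsingleton.elim (Units.map f u) (Units.map f v))⟩

theorem lengthSet_eq_of_subsingleton_units [Subsingleton Mˣ] (a : M) :
    lengthSet a = {k | ∃ w : Multiset M, (∀ x ∈ w, Irreducible x) ∧ w.prod = a ∧
      Multiset.card w = k} := by
  let e : M ≃* Associates M := MulEquiv.ofBijective Associates.mkMonoidHom
    ⟨Associates.mk_injective, Associates.mk_surjective⟩
  ext k
  constructor
  · rintro ⟨z, ⟨hirr, hprod⟩, rfl⟩
    obtain ⟨w, rfl⟩ : ∃ w, w.map e = z := ⟨z.map e.symm, by simp [Multiset.map_map]⟩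
    refine ⟨w, fun x hx => (MulEquiv.irreducible_iff e).1 (hirr _ (Multiset.mem_map_of_mem e hx)),
      e.injective ?_, (Multiset.card_map _ _).symm⟩
    rw [map_multiset_prod, hprod]
    rfl
  · rintro ⟨w, hirr, rfl, rfl⟩
    refine ⟨w.map e, ⟨?_, (map_multiset_prod e w).symm⟩, Multiset.card_map _ _⟩
    intro y hy
    obtain ⟨x, hx, rfl⟩ := Multiset.mem_map.1 hy
    exact (MulEquiv.irreducible_iff e).2 (hirr x hx)

section DivisorClosed

variable [Subsingleton Nˣ] {f : M →* N}

theorem irreducible_map_iff_of_dvd_mem_range (hf : Function.Injective f)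
    (hdvd : ∀ a x, x ∣ f a → x ∈ Set.range f) {a : M} : Irreducible (f a) ↔ Irreducible a := by
  have : IsLocalHom f := ⟨fun x hx => by
    rw [isUnit_iff_eq_one, ← f.map_one] at hx
    rw [hf hx]
    exact isUnit_one⟩
  refine ⟨Irreducible.of_map, fun ha => ⟨fun hfa => ha.not_isUnit (isUnit_of_map_unit f a hfa),
    fun x y hxy => ?_⟩⟩
  obtain ⟨b, rfl⟩ := hdvd a x (Dvd.intro y hxy.symm)
  obtain ⟨c, rfl⟩ := hdvd a y (Dvd.intro_left _ hxy.symm)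
  rw [← map_mul] at hxy
  exact (ha.isUnit_or_isUnit (hf hxy)).imp (IsUnit.map f) (IsUnit.map f)

theorem lengthSet_map_of_dvd_mem_range (hf : Function.Injective f)
    (hdvd : ∀ a x, x ∣ f a → x ∈ Set.range f) (a : M) : lengthSet (f a) = lengthSet a := by
  have : Subsingleton Mˣ := subsingleton_units_of_injective hf
  have : CanLift N M f (· ∈ Set.range f) := ⟨fun _ => id⟩
  rw [lengthSet_eq_of_subsingleton_units, lengthSet_eq_of_subsingleton_units]
  ext k
  constructor
  · rintro ⟨w, hirr, hprod, rfl⟩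
    lift w to Multiset M using fun x hx => hdvd a x (hprod ▸ Multiset.dvd_prod hx)
    refine ⟨w, fun x hx => ?_, hf ?_, (Multiset.card_map _ _).symm⟩
    · exact (irreducible_map_iff_of_dvd_mem_range hf hdvd).1
        (hirr _ (Multiset.mem_map_of_mem f hx))
    · rw [map_multiset_prod, hprod]
  · rintro ⟨w, hirr, rfl, rfl⟩
    refine ⟨w.map f, ?_, (map_multiset_prod f w).symm, Multiset.card_map _ _⟩
    intro y hy
    obtain ⟨x, hx, rfl⟩ := Multiset.mem_map.1 hy
    exact (irreducible_map_iff_of_dvd_mem_range hf hdvd).2 (hirr x hx)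

end DivisorClosed

end Factorization

section ZeroSumSequences

variable {G : Type*} [AddCommGroup G]

def IsMinimalZeroSum (A : Multiset G) : Prop :=
  A ≠ 0 ∧ A.sum = 0 ∧ ∀ B ≤ A, B.sum = 0 → B = 0 ∨ B = A

namespace BlockMonoid

theorem sum_eq_zero (S : BlockMonoid G) : (Multiplicative.toAdd (S : FreeCM G)).sum = 0 :=
  congrArg Multiplicative.toAdd (MonoidHom.mem_mker.1 S.2)

instance : CanLift (Multiset G) (BlockMonoid G) (fun S => Multiplicative.toAdd (S : FreeCM G))
    (fun A => A.sum = 0) :=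
  ⟨fun A hA => ⟨⟨Multiplicative.ofAdd A, MonoidHom.mem_mker.2 (congrArg Multiplicative.ofAdd hA)⟩,
    rfl⟩⟩

theorem toAdd_injective :
    Function.Injective fun S : BlockMonoid G => Multiplicative.toAdd (S : FreeCM G) :=
  fun _ _ h => Subtype.ext (Multiplicative.toAdd.injective h)

instance : Subsingleton (BlockMonoid G)ˣ :=
  subsingleton_units_of_injective (f := (BlockMonoid G).subtype) Subtype.val_injective

theorem irreducible_iff (S : BlockMonoid G) :
    Irreducible S ↔ IsMinimalZeroSum (Multiplicative.toAdd (S : FreeCM G)) := by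
  have hone : ∀ T : BlockMonoid G, Multiplicative.toAdd (T : FreeCM G) = 0 ↔ T = 1 :=
    fun T => toAdd_injective.eq_iff' rfl
  rw [_root_.irreducible_iff, isUnit_iff_eq_one, ← hone]
  refine ⟨fun ⟨hS, hsplit⟩ => ⟨hS, sum_eq_zero S, fun B hB hB0 => ?_⟩,
    fun ⟨hS, _, hmin⟩ => ⟨hS, fun T₁ T₂ h => ?_⟩⟩
  · obtain ⟨C, hC⟩ := Multiset.le_iff_exists_add.1 hB
    have hC0 : C.sum = 0 := by
      simpa only [hC, Multiset.sum_add, hB0, zero_add] using sum_eq_zero S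
    lift B to BlockMonoid G using hB0
    lift C to BlockMonoid G using hC0
    rcases hsplit (toAdd_injective hC) with h | h
    · exact Or.inl ((hone B).2 (isUnit_iff_eq_one.1 h))
    · rw [(hone C).2 (isUnit_iff_eq_one.1 h), add_zero] at hC
      exact Or.inr hC.symm
  · have hsum : Multiplicative.toAdd (S : FreeCM G) = Multiplicative.toAdd (T₁ : FreeCM G) +
        Multiplicative.toAdd (T₂ : FreeCM G) := by rw [h]; rfl
    rcases hmin _ (hsum ▸ Multiset.le_add_right _ _) (sum_eq_zero T₁) with h₁ | h₁
    · exact Or.inl (isUnit_iff_eq_one.2 ((hone T₁).1 h₁))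
    · refine Or.inr (isUnit_iff_eq_one.2 ((hone T₂).1 ?_))
      rwa [← h₁, left_eq_add] at hsum

theorem lengthSet_eq (S : BlockMonoid G) :
    lengthSet S = {k | ∃ P : Multiset (Multiset G), (∀ A ∈ P, IsMinimalZeroSum A) ∧
      P.sum = Multiplicative.toAdd (S : FreeCM G) ∧ Multiset.card P = k} := by
  have hprod : ∀ w : Multiset (BlockMonoid G), Multiplicative.toAdd (w.prod : FreeCM G) =
      (w.map fun T : BlockMonoid G => Multiplicative.toAdd (T : FreeCM G)).sum := fun w => by
    rw [Submonoid.coe_multiset_prod, toAdd_multiset_sum, Multiset.map_map]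
    rfl
  rw [lengthSet_eq_of_subsingleton_units]
  ext k
  constructor
  · rintro ⟨w, hirr, rfl, rfl⟩
    refine ⟨_, fun A hA => ?_, (hprod w).symm, Multiset.card_map _ _⟩
    obtain ⟨T, hT, rfl⟩ := Multiset.mem_map.1 hA
    exact (irreducible_iff T).1 (hirr T hT)
  · rintro ⟨P, hP, hPS, rfl⟩
    lift P to Multiset (BlockMonoid G) using fun A hA => (hP A hA).2.1
    refine ⟨P, fun T hT => (irreducible_iff T).2 (hP _ (Multiset.mem_map_of_mem _ hT)),
      toAdd_injective ?_, (Multiset.card_map _ _).symm⟩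
    exact (hprod P).trans hPS

end BlockMonoid

section TBlock

theorem seminormalD.subsingleton_units {U : Type*} [CommGroup U] {s : ℕ} (hs : 1 ≤ s) :
    Subsingleton (seminormalD U s)ˣ := by
  suffices h : ∀ u : (seminormalD U s)ˣ, u = 1 from ⟨fun u v => (h u).trans (h v).symm⟩
  intro u
  have hcoord : Multiplicative.toAdd (u.val.val.2 * u.inv.val.2) ⟨0, hs⟩ = 0 := by
    rw [← Prod.snd_mul, ← Submonoid.coe_mul, u.val_inv]
    rfl
  rcases u.val.property with h | h
  · exact Units.ext (Subtype.ext h)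
  · have := h ⟨0, hs⟩
    rw [toAdd_mul, Finsupp.add_apply] at hcoord
    omega

variable {n : ℕ} {U : Fin n → Type*} [∀ i, CommGroup (U i)] {s : Fin n → ℕ}

theorem Tm.subsingleton_units (hs : ∀ i, 1 ≤ s i) : Subsingleton (Tm U s)ˣ :=
  have (i : Fin n) : Subsingleton (seminormalD (U i) (s i))ˣ :=
    seminormalD.subsingleton_units (hs i)
  MulEquiv.piUnits.injective.subsingleton

def BlockMonoid.toTBlock (iota : Tm U s →* Multiplicative G) :
    BlockMonoid G →* TBlock G U s iota where
  toFun S := ⟨((S : FreeCM G), 1), MonoidHom.mem_mker.2 <| by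
    change sigmaHom G S * iota 1 = 1
    rw [map_one, mul_one]
    exact MonoidHom.mem_mker.1 S.2⟩
  map_one' := rfl
  map_mul' _ _ := Subtype.ext (Prod.ext rfl (mul_one 1).symm)

theorem BlockMonoid.toTBlock_injective (iota : Tm U s →* Multiplicative G) :
    Function.Injective (BlockMonoid.toTBlock iota) :=
  fun _ _ h => Subtype.ext (congrArg (fun x : TBlock G U s iota => x.val.1) h)

theorem BlockMonoid.mem_range_toTBlock_of_dvd (hs : ∀ i, 1 ≤ s i)
    (iota : Tm U s →* Multiplicative G) (S : BlockMonoid G) (x : TBlock G U s iota)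
    (hx : x ∣ BlockMonoid.toTBlock iota S) : x ∈ Set.range (BlockMonoid.toTBlock iota) := by
  have := Tm.subsingleton_units (U := U) hs
  obtain ⟨y, hxy⟩ := hx
  have hT : x.val.2 = 1 :=
    (mul_eq_one.1 (congrArg (fun x : TBlock G U s iota => x.val.2) hxy).symm).1
  have hphi : TBlockPhi G U s iota x.val = 1 := MonoidHom.mem_mker.1 x.2
  change sigmaHom G x.val.1 * iota x.val.2 = 1 at hphi
  rw [hT, iota.map_one, mul_one] at hphi
  exact ⟨⟨x.val.1, MonoidHom.mem_mker.2 hphi⟩, Subtype.ext (Prod.ext rfl hT.symm)⟩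

theorem TBlock.subsingleton_units (hs : ∀ i, 1 ≤ s i) (iota : Tm U s →* Multiplicative G) :
    Subsingleton (TBlock G U s iota)ˣ :=
  have := Tm.subsingleton_units (U := U) hs
  have : Subsingleton (Fm G U s)ˣ := MulEquiv.prodUnits.injective.subsingleton
  subsingleton_units_of_injective (f := (TBlock G U s iota).subtype) Subtype.val_injective

end TBlock

section Construction

open Pointwise

def HasEvenRelationsModulo (H : AddSubgroup G) {m : ℕ} (x : Fin m → G) : Prop :=
  ∀ e : Fin m → ℤ, (∀ i, -2 ≤ e i ∧ e i ≤ 2) → ∑ i, e i • x i ∈ H → ∀ i, Even (e i)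

def smallCombinations {m : ℕ} (x : Fin m → G) : Set G :=
  (fun e : Fin m → ℤ => ∑ i, e i • x i) '' Set.univ.pi fun _ => Set.Icc (-2) 2

theorem smallCombinations_finite {m : ℕ} (x : Fin m → G) : (smallCombinations x).Finite :=
  (Set.Finite.pi fun _ => Set.finite_Icc _ _).image _

/-- If `2G` is finite take `H = 2G`, otherwise `H = 0` and `g` with `2g` outside `F ∪ 2F`. -/
theorem exists_finite_addSubgroup_avoiding [Infinite G] :
    ∃ H : AddSubgroup G, (H : Set G).Finite ∧
      ∀ F : Set G, F.Finite → ∃ g ∉ F, 2 • g ∈ H ∨ 2 • g ∉ F := by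
  let D := (nsmulAddMonoidHom 2 : G →+ G).range
  by_cases hD : (D : Set G).Finite
  · refine ⟨D, hD, fun F hF => ?_⟩
    obtain ⟨g, hg⟩ := hF.exists_notMem
    exact ⟨g, hg, Or.inl ⟨g, rfl⟩⟩
  · refine ⟨⊥, by simp, fun F hF => ?_⟩
    obtain ⟨_, ⟨g, rfl⟩, hg⟩ :=
      Set.Infinite.exists_notMem_finite hD (hF.union (hF.image (2 • ·)))
    exact ⟨g, fun h => hg (Or.inr ⟨g, h, rfl⟩), Or.inr fun h => hg (Or.inl h)⟩

/-- Writing a relation as `a + e g` with `a` a combination of `x`: an odd `e` puts `g`, and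
`e = ±2` puts `2g`, into `±a + H`. -/
theorem HasEvenRelationsModulo.snoc {H : AddSubgroup G} {m : ℕ} {x : Fin m → G}
    (hx : HasEvenRelationsModulo H x) {g : G} (hg : g ∉ smallCombinations x + (H : Set G))
    (h2g : 2 • g ∈ H ∨ 2 • g ∉ smallCombinations x + (H : Set G)) :
    HasEvenRelationsModulo H (Fin.snoc (α := fun _ => G) x g) := by
  intro e he hsum
  set a := ∑ i : Fin m, e i.castSucc • x i
  have hmem : ∀ y, y + a ∈ H ∨ y - a ∈ H → y ∈ smallCombinations x + (H : Set G) := by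
    have ha : a ∈ smallCombinations x :=
      ⟨fun i => e i.castSucc, fun i _ => he i.castSucc, rfl⟩
    have hna : -a ∈ smallCombinations x := ⟨fun i => -e i.castSucc,
      fun i _ => ⟨by linarith [(he i.castSucc).2], by linarith [(he i.castSucc).1]⟩,
      by simp [a, ← Finset.sum_neg_distrib, neg_smul]⟩
    rintro y (hy | hy)
    · exact ⟨-a, hna, y + a, hy, by simp⟩
    · exact ⟨a, ha, y - a, hy, by simp⟩
  have hlast : Even (e (Fin.last m)) ∧ a ∈ H := by
    have hl := he (Fin.last m)
    replace hsum : a + e (Fin.last m) • g ∈ H := by simpa [Fin.sum_univ_castSucc] using hsum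
    obtain h | h | h | h | h : e (Fin.last m) = -2 ∨ e (Fin.last m) = -1 ∨
        e (Fin.last m) = 0 ∨ e (Fin.last m) = 1 ∨ e (Fin.last m) = 2 := by omega
    all_goals rw [h] at hsum ⊢
    · rw [neg_smul, two_zsmul, ← two_nsmul] at hsum
      refine ⟨even_neg.2 even_two, h2g.elim (fun h2 => by simpa using H.add_mem hsum h2)
        fun h2 => absurd (hmem _ (Or.inr ?_)) h2⟩
      simpa [sub_eq_add_neg] using H.neg_mem hsum
    · exact absurd (hmem g (Or.inr (by simpa [sub_eq_add_neg] using H.neg_mem hsum))) hg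
    · exact ⟨⟨0, rfl⟩, by simpa using hsum⟩
    · exact absurd (hmem g (Or.inl (by simpa [add_comm] using hsum))) hg
    · rw [two_zsmul, ← two_nsmul] at hsum
      refine ⟨even_two, h2g.elim (fun h2 => by simpa using H.sub_mem hsum h2)
        fun h2 => absurd (hmem _ (Or.inl (by rwa [add_comm]))) h2⟩
  intro i
  induction i using Fin.lastCases with
  | last => exact hlast.1
  | cast j => exact hx (fun i => e i.castSucc) (fun i => he i.castSucc) hlast.2 j

theorem exists_hasEvenRelations [Infinite G] (m : ℕ) :
    ∃ x : Fin m → G, ∀ e : Fin m → ℤ, (∀ i, -2 ≤ e i ∧ e i ≤ 2) → ∑ i, e i • x i = 0 →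
      ∀ i, Even (e i) := by
  obtain ⟨H, hH, hgood⟩ := exists_finite_addSubgroup_avoiding (G := G)
  suffices ∃ x : Fin m → G, HasEvenRelationsModulo H x from
    this.imp fun x hx e he hsum => hx e he (hsum ▸ H.zero_mem)
  induction m with
  | zero => exact ⟨Fin.elim0, fun _ _ _ i => i.elim0⟩
  | succ m ih =>
    obtain ⟨x, hx⟩ := ih
    obtain ⟨g, hg, h2g⟩ := hgood _ ((smallCombinations_finite x).add hH)
    exact ⟨_, HasEvenRelationsModulo.snoc hx hg h2g⟩

def HasAllOrNothingRelations {K : ℕ} (z : Fin K → G) : Prop :=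
  ∀ c : Fin K → ℤ, (∀ i, -1 ≤ c i ∧ c i ≤ 1) → ∑ i, c i • z i = 0 →
    (∀ i, c i = 0) ∨ (∀ i, c i ≠ 0)

/-- Take `z = (x₁, …, x_k, -∑ xᵢ)`: a relation `∑ cᵢ zᵢ = 0` becomes
`∑ (cᵢ - c_{k+1}) xᵢ = 0`, so all `cᵢ` have the parity of `c_{k+1}`. -/
theorem exists_hasAllOrNothingRelations [Infinite G] (k : ℕ) :
    ∃ z : Fin (k + 1) → G, ∑ i, z i = 0 ∧ HasAllOrNothingRelations z := by
  obtain ⟨x, hx⟩ := exists_hasEvenRelations (G := G) k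
  refine ⟨Fin.snoc x (-∑ i, x i), by simp [Fin.sum_univ_castSucc], fun c hc hsum => ?_⟩
  have hrel : ∑ i : Fin k, (c i.castSucc - c (Fin.last k)) • x i = 0 := by
    simpa [Fin.sum_univ_castSucc, sub_smul, Finset.sum_sub_distrib, Finset.smul_sum,
      ← sub_eq_add_neg] using hsum
  have heven := hx _ (fun i => by have := hc i.castSucc; have := hc (Fin.last k); omega) hrel
  have hpar : ∀ i, (c i - c (Fin.last k)) % 2 = 0 := fun i => by
    induction i using Fin.lastCases with
    | last => simp
    | cast j => exact Int.even_iff.1 (heven j)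
  by_cases h : c (Fin.last k) = 0
  · exact Or.inl fun i => by have := hpar i; have := hc i; omega
  · exact Or.inr fun i => by have := hpar i; have := hc i; have := hc (Fin.last k); omega

end Construction

section Letters

variable {K : ℕ}

/-- The terms of `S₀ = ∏ zᵢ (-zᵢ)` are indexed by letters `(i, b)`, so that subsequences of `S₀`
become submultisets of letters even when terms coincide (e.g. `zᵢ = -zᵢ`). -/
def letter (z : Fin K → G) (w : Fin K × Bool) : G := if w.2 then z w.1 else -z w.1

def indexCount (J : Multiset (Fin K × Bool)) (i : Fin K) : ℕ :=
  J.count (i, true) + J.count (i, false)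

theorem count_le_one_of_le_univ {J : Multiset (Fin K × Bool)} (hJ : J ≤ Finset.univ.val)
    (w : Fin K × Bool) : J.count w ≤ 1 :=
  (Multiset.count_le_of_le w hJ).trans (Multiset.count_univ w).le

theorem indexCount_le_of_le {J J' : Multiset (Fin K × Bool)} (h : J' ≤ J) (i : Fin K) :
    indexCount J' i ≤ indexCount J i :=
  add_le_add (Multiset.count_le_of_le _ h) (Multiset.count_le_of_le _ h)

theorem card_eq_sum_indexCount (J : Multiset (Fin K × Bool)) :
    Multiset.card J = ∑ i, indexCount J i := by
  rw [← Multiset.sum_count_eq_card (s := Finset.univ) fun _ _ => Finset.mem_univ _,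
    Fintype.sum_prod_type]
  simp [indexCount, add_comm]

theorem indexCount_sum (P : Multiset (Multiset (Fin K × Bool))) (i : Fin K) :
    indexCount P.sum i = (P.map (indexCount · i)).sum := by
  induction P using Multiset.induction_on with
  | empty => simp [indexCount]
  | cons J P ih =>
    rw [Multiset.sum_cons, Multiset.map_cons, Multiset.sum_cons, ← ih]
    simp only [indexCount, Multiset.count_add]
    ring

theorem sum_map_letter (z : Fin K → G) (J : Multiset (Fin K × Bool)) :
    (J.map (letter z)).sum = ∑ i, ((J.count (i, true) : ℤ) - J.count (i, false)) • z i := by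
  rw [Multiset.sum_map_eq_sum_count, Fintype.sum_prod_type]
  simp [letter, sub_eq_add_neg, add_smul, natCast_zsmul]

theorem sum_map_letter_univ (z : Fin K → G) : (Finset.univ.val.map (letter z)).sum = 0 := by
  rw [sum_map_letter]
  simp

variable {z : Fin K → G}

theorem indexCount_dichotomy (hz : HasAllOrNothingRelations z) {J : Multiset (Fin K × Bool)}
    (hJ : J ≤ Finset.univ.val) (h0 : (J.map (letter z)).sum = 0) :
    (∀ i, indexCount J i = 0 ∨ indexCount J i = 2) ∨ ∀ i, indexCount J i = 1 := by
  have hc := count_le_one_of_le_univ hJ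
  refine (hz _ (fun i => ?_) ((sum_map_letter z J).symm.trans h0)).imp
    (fun h i => ?_) (fun h i => ?_)
  all_goals have := hc (i, true); have := hc (i, false)
  · omega
  · have := h i; unfold indexCount; omega
  · have := h i; unfold indexCount; omega

theorem isMinimalZeroSum_map_letter (hz : HasAllOrNothingRelations z)
    {J : Multiset (Fin K × Bool)} (hJ : J ≤ Finset.univ.val) (hJ0 : J ≠ 0)
    (h0 : (J.map (letter z)).sum = 0)
    (hsub : ∀ ν : Fin K → ℕ, (∀ i, ν i ≤ indexCount J i) →
      ((∀ i, ν i = 0 ∨ ν i = 2) ∨ ∀ i, ν i = 1) → (∀ i, ν i = 0) ∨ ∀ i, ν i = indexCount J i) :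
    IsMinimalZeroSum (J.map (letter z)) := by
  refine ⟨by simpa using hJ0, h0, fun B hB hB0 => ?_⟩
  obtain ⟨J', hJ'J, rfl⟩ := Multiset.exists_le_map_eq_of_le_map hB
  rcases hsub _ (indexCount_le_of_le hJ'J) (indexCount_dichotomy hz (hJ'J.trans hJ) hB0)
    with h | h
  · left
    rw [Multiset.map_eq_zero, ← Multiset.card_eq_zero, card_eq_sum_indexCount]
    exact Finset.sum_eq_zero fun i _ => h i
  · right
    refine congrArg _ (Multiset.eq_of_le_of_card_le hJ'J ?_)
    simp only [card_eq_sum_indexCount, h, le_refl]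

/-- An atom dividing `S₀` is a pair `zᵢ (-zᵢ)` or takes one of `±zᵢ` for every `i`. -/
theorem isMinimalZeroSum_map_letter_cases (hz : HasAllOrNothingRelations z)
    {J : Multiset (Fin K × Bool)} (hJ : J ≤ Finset.univ.val)
    (hmin : IsMinimalZeroSum (J.map (letter z))) (i₀ : Fin K) :
    (Multiset.card J = 2 ∧ (indexCount J i₀ = 0 ∨ indexCount J i₀ = 2)) ∨
      (Multiset.card J = K ∧ indexCount J i₀ = 1) := by
  rcases indexCount_dichotomy hz hJ hmin.2.1 with h | h
  · refine Or.inl ⟨?_, h i₀⟩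
    have hJ0 : ∑ i, indexCount J i ≠ 0 := by
      rw [← card_eq_sum_indexCount, Ne, Multiset.card_eq_zero]
      rintro rfl
      exact hmin.1 rfl
    obtain ⟨i, -, hi⟩ := Finset.exists_ne_zero_of_sum_ne_zero hJ0
    have hpair : {(i, true), (i, false)} ≤ J := by
      have := count_le_one_of_le_univ hJ (i, true)
      have := count_le_one_of_le_univ hJ (i, false)
      have := h i
      unfold indexCount at hi this
      rw [Multiset.le_iff_subset (by simp)]
      intro w hw
      rw [Multiset.insert_eq_cons, Multiset.mem_cons, Multiset.mem_singleton] at hw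
      rcases hw with rfl | rfl <;> rw [← Multiset.count_pos] <;> omega
    rcases hmin.2.2 _ (Multiset.map_le_map hpair) (by simp [letter]) with h0 | heq
    · simp at h0
    · simpa using congrArg Multiset.card heq.symm
  · refine Or.inr ⟨?_, h i₀⟩
    simp [card_eq_sum_indexCount, h]

theorem card_eq_two_or_eq_of_sum_eq_map_letter_univ (hz : HasAllOrNothingRelations z)
    (hK : 0 < K) {P : Multiset (Multiset G)} (hP : ∀ A ∈ P, IsMinimalZeroSum A)
    (hsum : P.sum = Finset.univ.val.map (letter z)) :
    Multiset.card P = 2 ∨ Multiset.card P = K := by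
  obtain ⟨P', hP'sum, rfl⟩ := Multiset.exists_sum_eq_map_eq_of_sum_eq_map hsum
  have hle (J) (hJ : J ∈ P') : J ≤ Finset.univ.val := hP'sum ▸ Multiset.le_sum_of_mem hJ
  rw [Multiset.card_map]
  refine card_eq_two_or_eq_of_sum_map_eq P' Multiset.card (indexCount · ⟨0, hK⟩)
    (fun J hJ => isMinimalZeroSum_map_letter_cases hz (hle J hJ)
      (hP _ (Multiset.mem_map_of_mem _ hJ)) _) ?_ ?_
  · rw [← Multiset.card_join, Multiset.join, hP'sum, ← Finset.card_def, Finset.card_univ]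
    simp [mul_comm]
  · rw [← indexCount_sum, hP'sum]
    simp [indexCount]

theorem exists_factorization_card_two (hz : HasAllOrNothingRelations z) (hK : 0 < K)
    (hzsum : ∑ i, z i = 0) :
    ∃ P : Multiset (Multiset G), (∀ A ∈ P, IsMinimalZeroSum A) ∧
      P.sum = Finset.univ.val.map (letter z) ∧ Multiset.card P = 2 := by
  let T (b : Bool) : Multiset (Fin K × Bool) := Finset.univ.val.filter (·.2 = b)
  have hT (b : Bool) (i : Fin K) : indexCount (T b) i = 1 := by
    cases b <;> simp [T, indexCount]
  have hmin (b : Bool) : IsMinimalZeroSum ((T b).map (letter z)) := by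
    refine isMinimalZeroSum_map_letter hz (Multiset.filter_le _ _) ?_ ?_ fun ν hν hν' => ?_
    · intro h
      simpa [h, indexCount] using hT b ⟨0, hK⟩
    · rw [sum_map_letter]
      cases b <;> simp [T, hzsum]
    · simp only [hT] at hν ⊢
      rcases hν' with h | h
      · exact Or.inl fun i => by have := h i; have := hν i; omega
      · exact Or.inr h
  refine ⟨{(T true).map (letter z), (T false).map (letter z)}, ?_, ?_, rfl⟩
  · simp only [Multiset.insert_eq_cons, Multiset.mem_cons, Multiset.mem_singleton]
    rintro A (rfl | rfl) <;> apply hmin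
  · rw [Multiset.insert_eq_cons, Multiset.sum_cons, Multiset.sum_singleton, ← Multiset.map_add]
    congr 1
    ext ⟨i, b⟩
    cases b <;> simp [T]

theorem exists_factorization_card_eq (hz : HasAllOrNothingRelations z) (hK : 2 ≤ K) :
    ∃ P : Multiset (Multiset G), (∀ A ∈ P, IsMinimalZeroSum A) ∧
      P.sum = Finset.univ.val.map (letter z) ∧ Multiset.card P = K := by
  let pair (i : Fin K) : Multiset (Fin K × Bool) := {(i, true), (i, false)}
  have hpair (i j : Fin K) : indexCount (pair i) j = if j = i then 2 else 0 := by
    by_cases h : j = i <;> simp [pair, indexCount, h]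
  have hmin (i : Fin K) : IsMinimalZeroSum ((pair i).map (letter z)) := by
    refine isMinimalZeroSum_map_letter hz ?_ (by simp [pair]) (by simp [pair, letter])
      fun ν hν hν' => ?_
    · exact (Multiset.le_iff_subset (by simp [pair])).2 fun w _ => Finset.mem_univ w
    · simp only [hpair] at hν ⊢
      rcases hν' with h | h
      · rcases h i with hi | hi
        · refine Or.inl fun j => ?_
          by_cases hj : j = i
          · rwa [hj]
          · simpa [hj] using hν j
        · refine Or.inr fun j => ?_
          by_cases hj : j = i
          · simpa [hj] using hi
          · simpa [hj] using hν j
      · obtain ⟨j, hj⟩ := @exists_ne _ (Fin.nontrivial_iff_two_le.2 hK) i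
        simpa [hj, h j] using hν j
  refine ⟨Finset.univ.val.map fun i => (pair i).map (letter z), ?_, ?_, by simp⟩
  · simp only [Multiset.mem_map]
    rintro A ⟨i, -, rfl⟩
    exact hmin i
  · change ∑ i, Multiset.mapAddMonoidHom (letter z) (pair i) = _
    rw [← map_sum]
    -- `Finset.univ` on `Fin K × Bool` unfolds to `∑ i, {(i, true), (i, false)}`
    rfl

theorem setOf_card_factorization_map_letter_univ (hz : HasAllOrNothingRelations z) (hK : 2 ≤ K)
    (hzsum : ∑ i, z i = 0) :
    {k | ∃ P : Multiset (Multiset G), (∀ A ∈ P, IsMinimalZeroSum A) ∧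
      P.sum = Finset.univ.val.map (letter z) ∧ Multiset.card P = k} = {2, K} := by
  ext k
  constructor
  · rintro ⟨P, hP, hsum, rfl⟩
    exact card_eq_two_or_eq_of_sum_eq_map_letter_univ hz (by omega) hP hsum
  · rintro (rfl | rfl)
    exacts [exists_factorization_card_two hz (by omega) hzsum,
      exists_factorization_card_eq hz hK]

end Letters

end ZeroSumSequences

theorem tblock_delta_of_infinite_group_general
    {G : Type*} [AddCommGroup G] [Infinite G]
    {n : ℕ} (U : Fin n → Type*) [∀ i, CommGroup (U i)]
    (s : Fin n → ℕ) (hs : ∀ i, 1 ≤ s i)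
    (iota : Tm U s →* Multiplicative G) :
    DeltaMonoid ↥(TBlock G U s iota) = {d : ℕ | 0 < d} := by
  ext d
  simp only [DeltaMonoid, DeltaSet, Set.mem_iUnion, Set.mem_ofPred_eq]
  refine ⟨fun ⟨_, k, l, _, _, hkl, _, hd⟩ => by omega, fun hd => ?_⟩
  obtain ⟨z, hzsum, hz⟩ := exists_hasAllOrNothingRelations (G := G) (d + 1)
  lift Finset.univ.val.map (letter z) to BlockMonoid G using sum_map_letter_univ z with S hS
  have := TBlock.subsingleton_units hs iota
  have hL : lengthSet (BlockMonoid.toTBlock iota S) = {2, d + 2} := by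
    rw [lengthSet_map_of_dvd_mem_range (BlockMonoid.toTBlock_injective iota)
      (BlockMonoid.mem_range_toTBlock_of_dvd hs iota), BlockMonoid.lengthSet_eq, hS,
      setOf_card_factorization_map_letter_univ hz (by omega) hzsum]
  refine ⟨BlockMonoid.toTBlock iota S, 2, d + 2, by simp [hL], by simp [hL], by omega,
    fun m hm₁ hm₂ hm => ?_, by omega⟩
  simp only [hL, Set.mem_insert_iff, Set.mem_singleton_iff] at hm
  omega

/-- Step 2 in the proof of Theorem 1.1: if `G` is an infinite abelian group, then the
`T`-block monoid `B = B(G, T, ι)` satisfies `Δ(B) = ℕ`. -/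
theorem tblock_delta_of_infinite_group
    {G : Type*} [AddCommGroup G] [Infinite G]
    {n : ℕ} (hn : 0 < n) (U : Fin n → Type*) [∀ i, CommGroup (U i)]
    (s : Fin n → ℕ) (hs : ∀ i, 1 ≤ s i)
    (iota : Tm U s →* Multiplicative G) :
    DeltaMonoid ↥(TBlock G U s iota) = {d : ℕ | 0 < d} :=
  tblock_delta_of_infinite_group_general U s hs iota

end
end ArXivSeminormal
end

section
/- Assume Setting (S). Then either Δ(B) = ∅ or min Δ(B) = 1. -/
namespace ArXivSeminormal

attribute [local instance] Classical.propDecidable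

noncomputable section

/-! ### Generic factorization theory in commutative monoids -/

variable {M : Type*} [CommMonoid M]

/-!
If `G` has nonzero elements `g, h` with `g + h ≠ 0`, put `k = -(g + h)`: the zero-sum sequences
satisfy `(g h k)(-g -h -k) = (g -g)(h -h)(k -k)`, two atoms against three, so `1 ∈ Δ(B)`.

Otherwise `|G| ≤ 2` and the same happens inside `T` as soon as some `D_ν` has rank at least two
or a unit whose class differs from that of `1`: then some `D_ν` contains atoms `a, b, c` with
`ab = c²` and `[a] = [b] ≠ [c]`, or atoms with `bc = a³` and all classes trivial. In the first
case the relation lifts to `B` as `(ea)(eb) = (ee)cc` or `(ec)(ec) = (ee)ab`, where `e` is the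
nonzero element of `G`, according to which side has class `e`; in the second it already holds in
`B`.

In the remaining case every `D_i` has rank one and its units have trivial class, so
`ι(ε q_i^k) = k [q_i]`. Replacing `q_i^k` by `k` copies of `[q_i]` maps `F` onto `F(G)` and `B`
into the zero-sum sequences, where the weight `|S| + v_0(S)` is additive, even, and equal to `2`
on every atom of `B`; hence `B` is half-factorial and `Δ(B) = ∅`.
-/

theorem _root_.Associates.irreducible_mk_iff {a : M} :
    Irreducible (Associates.mk a) ↔ Irreducible a := by
  simp only [irreducible_iff, Associates.isUnit_mk, Associates.forall_associated,
    Associates.mk_mul_mk, Associates.mk_eq_mk_iff_associated, Associated.comm (x := a)]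
  refine Iff.rfl.and ⟨fun h x y hxy => h x y (hxy ▸ .refl _), fun h x y ⟨u, hu⟩ => ?_⟩
  simpa using h (by rw [← hu, mul_assoc] : a = x * (y * u))

lemma _root_.Pi.irreducible_mulSingle {ι : Type*} [DecidableEq ι] {M : ι → Type*}
    [∀ i, CommMonoid (M i)] {i : ι} {d : M i} (hd : Irreducible d) :
    Irreducible (Pi.mulSingle i d) := by
  refine ⟨fun h => hd.not_isUnit (by simpa using h.map (Pi.evalMonoidHom M i)),
    fun a b hab => ?_⟩
  have hoff : ∀ j ≠ i, a j * b j = 1 := fun j hj => by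
    simpa [Pi.mulSingle_eq_of_ne hj] using (congrFun hab j).symm
  rcases hd.isUnit_or_isUnit (by simpa using congrFun hab i) with h | h
  · refine Or.inl (Pi.isUnit_iff.2 fun j => ?_)
    by_cases hj : j = i
    · exact hj ▸ h
    · exact IsUnit.of_mul_eq_one _ (hoff j hj)
  · refine Or.inr (Pi.isUnit_iff.2 fun j => ?_)
    by_cases hj : j = i
    · exact hj ▸ h
    · exact IsUnit.of_mul_eq_one_right _ (hoff j hj)

lemma map_mk_mem_factorizations {l : Multiset M} (hl : ∀ x ∈ l, Irreducible x) :
    l.map Associates.mk ∈ Factorizations l.prod := by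
  refine ⟨fun x hx => ?_, Associates.prod_mk⟩
  obtain ⟨a, ha, rfl⟩ := Multiset.mem_map.1 hx
  exact Associates.irreducible_mk_iff.2 (hl a ha)

lemma one_mem_deltaMonoid_of_mul_eq_mul_mul {a₁ a₂ b₁ b₂ b₃ : M} (ha₁ : Irreducible a₁)
    (ha₂ : Irreducible a₂) (hb₁ : Irreducible b₁) (hb₂ : Irreducible b₂) (hb₃ : Irreducible b₃)
    (h : a₁ * a₂ = b₁ * b₂ * b₃) : 1 ∈ DeltaMonoid M := by
  have h2 : 2 ∈ lengthSet (a₁ * a₂) :=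
    ⟨_, by simpa using map_mk_mem_factorizations (l := {a₁, a₂}) (by simp [ha₁, ha₂]), by simp⟩
  have h3 : 3 ∈ lengthSet (a₁ * a₂) := by
    refine ⟨_, ?_, (by simp : Multiset.card (Multiset.map Associates.mk {b₁, b₂, b₃}) = 3)⟩
    simpa [h, mul_assoc] using
      map_mk_mem_factorizations (l := {b₁, b₂, b₃}) (by simp [hb₁, hb₂, hb₃])
  exact Set.mem_iUnion.2 ⟨a₁ * a₂, 2, 3, h2, h3, by omega, by omega, rfl⟩

lemma sInf_deltaMonoid_eq_one_of_one_mem (h : 1 ∈ DeltaMonoid M) : sInf (DeltaMonoid M) = 1 := by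
  have h0 : 0 ∉ DeltaMonoid M := by
    simp only [DeltaMonoid, DeltaSet, Set.mem_iUnion, Set.mem_ofPred_eq, not_exists]
    omega
  refine le_antisymm (Nat.sInf_le h) (Nat.one_le_iff_ne_zero.2 fun h' => ?_)
  exact h0 (h' ▸ Nat.sInf_mem ⟨1, h⟩)

lemma eq_zero_of_isUnit_of_map_mul {w : M → ℕ} (hw : ∀ a b, w (a * b) = w a + w b) {u : M}
    (hu : IsUnit u) : w u = 0 := by
  obtain ⟨v, hv⟩ := hu.exists_right_inv
  have h1 : w 1 = 0 := by simpa using hw 1 1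
  have := hw u v
  rw [hv, h1] at this
  omega

lemma mul_card_eq_of_mem_factorizations {w : M → ℕ} (hw : ∀ a b, w (a * b) = w a + w b)
    {k : ℕ} (hk : ∀ a, Irreducible a → w a = k) {z : Multiset (Associates M)} :
    ∀ {a : M}, z ∈ Factorizations a → k * Multiset.card z = w a := by
  induction z using Multiset.induction with
  | empty =>
    intro a ⟨_, ha⟩
    rw [Multiset.prod_zero, eq_comm, Associates.mk_eq_one] at ha
    simp [eq_zero_of_isUnit_of_map_mul hw ha]
  | cons x z ih =>
    intro a ⟨hirr, ha⟩
    obtain ⟨b, rfl⟩ := Associates.mk_surjective x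
    obtain ⟨c, hc⟩ := Associates.mk_surjective z.prod
    rw [Multiset.prod_cons, ← hc, Associates.mk_mul_mk, Associates.mk_eq_mk_iff_associated]
      at ha
    obtain ⟨u, rfl⟩ := ha
    have hb := hk b (Associates.irreducible_mk_iff.1 (hirr _ (Multiset.mem_cons_self _ _)))
    have hc' := ih ⟨fun y hy => hirr y (Multiset.mem_cons_of_mem hy), hc.symm⟩
    rw [hw, hw, eq_zero_of_isUnit_of_map_mul hw u.isUnit, hb, ← hc', Multiset.card_cons]
    ring

lemma deltaMonoid_eq_empty_of_weight {w : M → ℕ} (hw : ∀ a b, w (a * b) = w a + w b)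
    {k : ℕ} (hk0 : 0 < k) (hk : ∀ a, Irreducible a → w a = k) : DeltaMonoid M = ∅ := by
  refine Set.eq_empty_of_forall_notMem fun d hd => ?_
  obtain ⟨a, l, l', ⟨z, hz, rfl⟩, ⟨z', hz', rfl⟩, hlt, -⟩ := Set.mem_iUnion.1 hd
  have := (mul_card_eq_of_mem_factorizations hw hk hz).trans
    (mul_card_eq_of_mem_factorizations hw hk hz').symm
  exact hlt.ne (Nat.eq_of_mul_eq_mul_left hk0 this)

section Sequences

variable {G : Type*} [AddCommGroup G]

/-- Equivalent to `Nat.card G ≤ 2`. -/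
def CardLeTwo (G : Type*) [AddCommGroup G] : Prop :=
  ∀ g h : G, g ≠ 0 → h ≠ 0 → g + h = 0

lemma CardLeTwo.mul_self_eq_one (hG : CardLeTwo G) (x : Multiplicative G) : x * x = 1 := by
  by_cases hx : Multiplicative.toAdd x = 0
  · simp [toAdd_eq_zero.1 hx]
  · exact toAdd_eq_zero.1 (hG _ _ hx hx)

lemma eq_zero_or_eq_of_le_of_card_le_three {S X : Multiset G} (hS : Multiset.card S ≤ 3)
    (h0 : ∀ g ∈ S, g ≠ 0) (hsum : S.sum = 0) (hX : X ≤ S) (hX0 : X.sum = 0) :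
    X = 0 ∨ X = S := by
  obtain ⟨Y, rfl⟩ := le_iff_exists_add.1 hX
  have hY0 : Y.sum = 0 := by simpa [hX0] using hsum
  have card_ne_one : ∀ Z ≤ X + Y, Z.sum = 0 → Multiset.card Z ≠ 1 := by
    intro Z hZ hZ0 hZ1
    obtain ⟨g, rfl⟩ := Multiset.card_eq_one.1 hZ1
    exact h0 g (Multiset.mem_of_le hZ (Multiset.mem_singleton_self g)) (by simpa using hZ0)
  have hX1 := card_ne_one X hX hX0
  have hY1 := card_ne_one Y (Multiset.le_add_left _ _) hY0
  rw [Multiset.card_add] at hS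
  rcases Nat.eq_zero_or_pos (Multiset.card X) with hX' | hX'
  · exact Or.inl (Multiset.card_eq_zero.1 hX')
  · right
    have : Multiset.card Y = 0 := by omega
    simp [Multiset.card_eq_zero.1 this]

def seqWeight (S : Multiset G) : ℕ := Multiset.card S + S.count 0

@[simp] lemma seqWeight_zero : seqWeight (0 : Multiset G) = 0 := rfl

@[simp] lemma seqWeight_add (S T : Multiset G) :
    seqWeight (S + T) = seqWeight S + seqWeight T := by
  simp only [seqWeight, Multiset.card_add, Multiset.count_add]
  ring

lemma seqWeight_singleton (g : G) : seqWeight {g} = if g = 0 then 2 else 1 := by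
  by_cases hg : g = 0 <;> simp [seqWeight, hg, eq_comm]

lemma even_seqWeight_iff (hG : CardLeTwo G) (S : Multiset G) :
    Even (seqWeight S) ↔ S.sum = 0 := by
  induction S using Multiset.induction with
  | empty => simp
  | cons g S ih =>
    rw [← Multiset.singleton_add, seqWeight_add, seqWeight_singleton, Multiset.sum_add,
      Multiset.sum_singleton]
    by_cases hg : g = 0
    · simp [hg, ih, Nat.even_add]
    · rw [if_neg hg, add_comm, Nat.even_add_one, ih]
      by_cases hS : S.sum = 0
      · simpa [hS] using hg
      · simpa [hS] using hG g _ hg hS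

end Sequences

namespace seminormalD

variable {U : Type*} [CommGroup U] {s : ℕ}

def exponent (d : seminormalD U s) : Fin s →₀ ℕ := Multiplicative.toAdd (d : U × _).2

@[simp] lemma exponent_mul (a b : seminormalD U s) :
    exponent (a * b) = exponent a + exponent b := rfl

@[simp] lemma exponent_one : exponent (1 : seminormalD U s) = 0 := rfl

lemma one_le_exponent_of_ne_one {d : seminormalD U s} (hd : d ≠ 1) (j : Fin s) :
    1 ≤ exponent d j :=
  (d.2.resolve_left fun h => hd (Subtype.ext h)) j

lemma eq_one_of_mul_eq_one (hs : 1 ≤ s) {a b : seminormalD U s} (h : a * b = 1) : a = 1 := by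
  by_contra ha
  have := congrArg (fun d => exponent d ⟨0, hs⟩) h
  simp only [exponent_mul, exponent_one, Finsupp.add_apply, Finsupp.coe_zero,
    Pi.zero_apply] at this
  have := one_le_exponent_of_ne_one ha ⟨0, hs⟩
  omega

lemma isUnit_iff (hs : 1 ≤ s) {d : seminormalD U s} : IsUnit d ↔ d = 1 :=
  ⟨fun h => have ⟨_, he⟩ := h.exists_right_inv; eq_one_of_mul_eq_one hs he,
    fun h => h ▸ isUnit_one⟩

lemma irreducible_of_exponent_eq_one {d : seminormalD U s} {j : Fin s}
    (hj : exponent d j = 1) : Irreducible d := by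
  refine ⟨fun ⟨u, hu⟩ => ?_, fun a b hab => ?_⟩
  · have := congrArg (fun d => exponent d j) (hu ▸ u.mul_inv)
    simp only [exponent_mul, exponent_one, Finsupp.add_apply, Finsupp.coe_zero,
      Pi.zero_apply] at this
    omega
  · by_contra! h
    have := congrArg (fun d => exponent d j) hab
    have ha := one_le_exponent_of_ne_one (d := a) (fun h' => h.1 (h' ▸ isUnit_one)) j
    have hb := one_le_exponent_of_ne_one (d := b) (fun h' => h.2 (h' ▸ isUnit_one)) j
    simp only [exponent_mul, Finsupp.add_apply] at this
    omega

def degree (d : seminormalD U s) : ℕ := (exponent d).degree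

@[simp] lemma degree_mul (a b : seminormalD U s) : degree (a * b) = degree a + degree b := by
  simp [degree]

@[simp] lemma degree_one : degree (1 : seminormalD U s) = 0 := by
  simp [degree]

lemma degree_eq_zero_iff (hs : 1 ≤ s) {d : seminormalD U s} : degree d = 0 ↔ d = 1 := by
  refine ⟨fun h => ?_, fun h => h ▸ degree_one⟩
  by_contra hd
  have := one_le_exponent_of_ne_one hd ⟨0, hs⟩
  rw [degree, Finsupp.degree_eq_zero_iff] at h
  simp [h] at this

def mk (ζ : U) (v : Fin s → ℕ+) : seminormalD U s :=
  ⟨(ζ, Multiplicative.ofAdd (Finsupp.equivFunOnFinite.symm fun j => (v j : ℕ))),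
    Or.inr fun j => (v j).pos⟩

@[simp] lemma exponent_mk (ζ : U) (v : Fin s → ℕ+) (j : Fin s) :
    exponent (mk ζ v) j = v j := rfl

lemma degree_mk (ζ : U) (v : Fin s → ℕ+) : degree (mk ζ v) = ∑ j, (v j : ℕ) := by
  simp [degree, Finsupp.degree_eq_sum]

lemma mk_mul_mk (ζ ζ' : U) (v v' : Fin s → ℕ+) :
    mk ζ v * mk ζ' v' = mk (ζ * ζ') (v + v') := by
  refine Subtype.ext (Prod.ext rfl (congrArg Multiplicative.ofAdd (Finsupp.ext fun j => ?_)))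
  change exponent (mk ζ v) j + exponent (mk ζ' v') j = _
  simp

lemma irreducible_mk (ζ : U) {v : Fin s → ℕ+} {j : Fin s} (hj : v j = 1) :
    Irreducible (mk ζ v) :=
  irreducible_of_exponent_eq_one (j := j) (by simp [hj])

lemma eq_mk_of_ne_one {d : seminormalD U s} (hd : d ≠ 1) :
    d = mk d.val.1 fun j => ⟨exponent d j, one_le_exponent_of_ne_one hd j⟩ :=
  Subtype.ext (Prod.ext rfl (congrArg Multiplicative.ofAdd (Finsupp.ext fun _ => rfl)))

lemma exists_eq_mk_one_mul (hs : s = 1) {d : seminormalD U s} (hd : d ≠ 1) :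
    ∃ ζ d', d = mk ζ 1 * d' ∧ degree d = degree d' + 1 := by
  subst hs
  rw [eq_mk_of_ne_one hd]
  set ζ := d.val.1
  set v : Fin 1 → ℕ+ := fun j => ⟨exponent d j, one_le_exponent_of_ne_one hd j⟩
  by_cases hv : v 0 = 1
  · refine ⟨ζ, 1, by rw [mul_one]; congr; funext j; rwa [Subsingleton.elim j 0], ?_⟩
    simp [degree_mk, hv]
  · obtain ⟨k, hk⟩ := PNat.exists_eq_succ_of_ne_one hv
    refine ⟨ζ, mk 1 fun _ => k, ?_, ?_⟩
    · rw [mk_mul_mk, mul_one]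
      congr
      funext j
      rw [Subsingleton.elim j 0, hk, add_comm]
      rfl
    · simp [degree_mk, hk]

end seminormalD

section TBlockMonoid

variable {G : Type*} [AddCommGroup G] {n : ℕ} {U : Fin n → Type*} [∀ i, CommGroup (U i)]
  {s : Fin n → ℕ} {iota : Tm U s →* Multiplicative G}

lemma Tm.isUnit_iff (hs : ∀ i, 1 ≤ s i) {t : Tm U s} : IsUnit t ↔ t = 1 := by
  simp [Pi.isUnit_iff, seminormalD.isUnit_iff (hs _), funext_iff]

def monomial (ν : Fin n) (ζ : U ν) (v : Fin (s ν) → ℕ+) : Tm U s :=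
  Pi.mulSingle ν (seminormalD.mk ζ v)

lemma monomial_mul_monomial (ν : Fin n) (ζ ζ' : U ν) (v v' : Fin (s ν) → ℕ+) :
    monomial ν ζ v * monomial ν ζ' v' = monomial ν (ζ * ζ') (v + v') := by
  rw [monomial, monomial, monomial, ← Pi.mulSingle_mul, seminormalD.mk_mul_mk]

lemma irreducible_monomial (ν : Fin n) (ζ : U ν) {v : Fin (s ν) → ℕ+} {j : Fin (s ν)}
    (hj : v j = 1) : Irreducible (monomial ν ζ v) :=
  Pi.irreducible_mulSingle (seminormalD.irreducible_mk ζ hj)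

namespace TBlock

def mk' (S : Multiset G) (t : Tm U s) (h : Multiplicative.ofAdd S.sum * iota t = 1) :
    TBlock G U s iota :=
  ⟨(Multiplicative.ofAdd S, t), MonoidHom.mem_mker.2 h⟩

@[simp] lemma toAdd_fst_mk' (S : Multiset G) (t : Tm U s) (h) :
    Multiplicative.toAdd ((mk' (iota := iota) S t h : Fm G U s).1) = S := rfl

@[simp] lemma snd_mk' (S : Multiset G) (t : Tm U s) (h) :
    ((mk' (iota := iota) S t h : Fm G U s).2) = t := rfl

lemma ext' {x y : TBlock G U s iota}
    (h₁ : Multiplicative.toAdd (x : Fm G U s).1 = Multiplicative.toAdd (y : Fm G U s).1)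
    (h₂ : (x : Fm G U s).2 = (y : Fm G U s).2) : x = y :=
  Subtype.ext (Prod.ext h₁ h₂)

lemma sum_fst_eq_zero {x : TBlock G U s iota} (hx : (x : Fm G U s).2 = 1) :
    (Multiplicative.toAdd (x : Fm G U s).1).sum = 0 := by
  have h : sigmaHom G (x : Fm G U s).1 * iota (x : Fm G U s).2 = 1 :=
    (MonoidHom.mem_mker (f := TBlockPhi G U s iota)).1 x.2
  rw [hx, map_one, mul_one] at h
  exact congrArg Multiplicative.toAdd h

lemma toAdd_fst_le_of_mul_eq {x y z : TBlock G U s iota} (h : y * z = x) :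
    Multiplicative.toAdd (y : Fm G U s).1 ≤ Multiplicative.toAdd (x : Fm G U s).1 := by
  rw [← h]
  exact Multiset.le_add_right _ _

lemma isUnit_iff (hs : ∀ i, 1 ≤ s i) {x : TBlock G U s iota} : IsUnit x ↔ x = 1 := by
  refine ⟨fun h => ?_, fun h => h ▸ isUnit_one⟩
  obtain ⟨y, hxy⟩ := h.exists_right_inv
  have h₁ := congrArg (fun z : TBlock G U s iota => Multiplicative.toAdd (z : Fm G U s).1) hxy
  have h₂ := congrArg (fun z : TBlock G U s iota => (z : Fm G U s).2) hxy
  exact ext' (eq_zero_of_add_right h₁) ((Tm.isUnit_iff hs).1 (IsUnit.of_mul_eq_one _ h₂))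

lemma eq_one_of_snd_eq_one {y : TBlock G U s iota} (hy : (y : Fm G U s).2 = 1) {S : Multiset G}
    (hle : Multiplicative.toAdd (y : Fm G U s).1 ≤ S) (hS : ∀ X ≤ S, X.sum = 0 → X = 0) :
    y = 1 :=
  ext' (hS _ hle (sum_fst_eq_zero hy)) hy

lemma irreducible_mk'_of_card_le_three (hs : ∀ i, 1 ≤ s i) (S : Multiset G)
    (hS : Multiset.card S ≤ 3) (hS₀ : S ≠ 0) (h0 : ∀ g ∈ S, g ≠ 0) (hsum : S.sum = 0) :
    Irreducible (mk' (iota := iota) S 1 (by simp [hsum])) := by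
  refine ⟨fun h => hS₀ (by simpa using congrArg (fun x : TBlock G U s iota =>
    Multiplicative.toAdd (x : Fm G U s).1) ((isUnit_iff hs).1 h)), fun y z hyz => ?_⟩
  have hyz₂ : (y : Fm G U s).2 * (z : Fm G U s).2 = 1 := by
    simpa using (congrArg (fun x : TBlock G U s iota => (x : Fm G U s).2) hyz).symm
  have hy₂ := (Tm.isUnit_iff hs).1 (IsUnit.of_mul_eq_one _ hyz₂)
  have hz₂ := (Tm.isUnit_iff hs).1 (IsUnit.of_mul_eq_one_right _ hyz₂)
  rcases eq_zero_or_eq_of_le_of_card_le_three hS h0 hsum (toAdd_fst_le_of_mul_eq hyz.symm)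
    (sum_fst_eq_zero hy₂) with hy | hy
  · exact Or.inl ((isUnit_iff hs).2 (ext' hy hy₂))
  · refine Or.inr ((isUnit_iff hs).2 (ext' ?_ hz₂))
    have := congrArg (fun x : TBlock G U s iota => Multiplicative.toAdd (x : Fm G U s).1) hyz
    simp only [Submonoid.coe_mul, Prod.fst_mul, toAdd_mul, toAdd_fst_mk', hy] at this
    exact add_eq_left.1 this.symm

lemma irreducible_mk'_of_card_le_one (hs : ∀ i, 1 ≤ s i) (S : Multiset G) {t : Tm U s}
    (ht : Irreducible t) (hS : Multiset.card S ≤ 1) (h0 : ∀ g ∈ S, g ≠ 0)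
    (h : Multiplicative.ofAdd S.sum * iota t = 1) : Irreducible (mk' S t h) := by
  have hfree : ∀ X ≤ S, X.sum = 0 → X = 0 := fun X hX hX0 => by
    rcases Nat.le_one_iff_eq_zero_or_eq_one.1 ((Multiset.card_le_card hX).trans hS) with h | h
    · exact Multiset.card_eq_zero.1 h
    · obtain ⟨g, rfl⟩ := Multiset.card_eq_one.1 h
      exact absurd (by simpa using hX0)
        (h0 g (Multiset.mem_of_le hX (Multiset.mem_singleton_self g)))
  refine ⟨fun h' => ht.not_isUnit (by rw [← snd_mk' S t h, (isUnit_iff hs).1 h']; exact isUnit_one),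
    fun y z hyz => ?_⟩
  have hyz₂ : t = (y : Fm G U s).2 * (z : Fm G U s).2 := by
    simpa using congrArg (fun x : TBlock G U s iota => (x : Fm G U s).2) hyz
  rcases ht.isUnit_or_isUnit hyz₂ with h' | h'
  · exact Or.inl ((isUnit_iff hs).2 (eq_one_of_snd_eq_one (S := S) ((Tm.isUnit_iff hs).1 h')
      (toAdd_fst_le_of_mul_eq hyz.symm) hfree))
  · exact Or.inr ((isUnit_iff hs).2 (eq_one_of_snd_eq_one (S := S) ((Tm.isUnit_iff hs).1 h')
      (toAdd_fst_le_of_mul_eq (mul_comm y z ▸ hyz.symm)) hfree))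

end TBlock

open TBlock

theorem one_mem_deltaMonoid_of_add_ne_zero (hs : ∀ i, 1 ≤ s i) {g h : G} (hg : g ≠ 0)
    (hh : h ≠ 0) (hgh : g + h ≠ 0) : 1 ∈ DeltaMonoid (TBlock G U s iota) := by
  obtain ⟨k, hghk⟩ : ∃ k, g + h + k = 0 := ⟨-(g + h), add_neg_cancel _⟩
  have hk : k ≠ 0 := fun hk => hgh (by simpa [hk] using hghk)
  refine one_mem_deltaMonoid_of_mul_eq_mul_mul
    (irreducible_mk'_of_card_le_three hs {g, h, k} (by simp) (by simp) (by simp [hg, hh, hk])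
      (by simp [← hghk, add_assoc]))
    (irreducible_mk'_of_card_le_three hs {-g, -h, -k} (by simp) (by simp)
      (by simp [hg, hh, hk])
      (by rw [show ({-g, -h, -k} : Multiset G).sum = -(g + h + k) by simp; abel, hghk,
        neg_zero]))
    (irreducible_mk'_of_card_le_three hs {g, -g} (by simp) (by simp) (by simp [hg]) (by simp))
    (irreducible_mk'_of_card_le_three hs {h, -h} (by simp) (by simp) (by simp [hh]) (by simp))
    (irreducible_mk'_of_card_le_three hs {k, -k} (by simp) (by simp) (by simp [hk]) (by simp))
    (ext' ?_ (by simp))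
  simp only [Submonoid.coe_mul, Prod.fst_mul, toAdd_mul, toAdd_fst_mk', Multiset.insert_eq_cons,
    ← Multiset.singleton_add]
  abel

theorem one_mem_deltaMonoid_of_mul_eq_mul (hs : ∀ i, 1 ≤ s i) {a b c d : Tm U s}
    (ha : Irreducible a) (hb : Irreducible b) (hc : Irreducible c) (hd : Irreducible d)
    (habcd : a * b = c * d) {g : G} (hg : g ≠ 0) (hag : iota a = Multiplicative.ofAdd g)
    (hbg : iota b = Multiplicative.ofAdd g) (hc1 : iota c = 1) (hd1 : iota d = 1) :
    1 ∈ DeltaMonoid (TBlock G U s iota) := by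
  have hgg : g + g = 0 := by
    simpa [hag, hbg, hc1, hd1, ← ofAdd_add] using congrArg iota habcd
  refine one_mem_deltaMonoid_of_mul_eq_mul_mul
    (irreducible_mk'_of_card_le_one hs {g} ha (by simp) (by simpa using hg)
      (by simp [hag, ← ofAdd_add, hgg]))
    (irreducible_mk'_of_card_le_one hs {g} hb (by simp) (by simpa using hg)
      (by simp [hbg, ← ofAdd_add, hgg]))
    (irreducible_mk'_of_card_le_three hs {g, g} (by simp) (by simp) (by simpa using hg)
      (by simpa using hgg))
    (irreducible_mk'_of_card_le_one hs 0 hc (by simp) (by simp) (by simp [hc1]))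
    (irreducible_mk'_of_card_le_one hs 0 hd (by simp) (by simp) (by simp [hd1]))
    (ext' (by simp) (by simpa [mul_assoc] using habcd))

theorem one_mem_deltaMonoid_of_mul_eq_pow_three (hs : ∀ i, 1 ≤ s i) {a b c : Tm U s}
    (ha : Irreducible a) (hb : Irreducible b) (hc : Irreducible c) (h : b * c = a ^ 3)
    (ha1 : iota a = 1) (hb1 : iota b = 1) (hc1 : iota c = 1) :
    1 ∈ DeltaMonoid (TBlock G U s iota) := by
  have atom : ∀ t, Irreducible t → (ht : iota t = 1) →
      Irreducible (mk' (iota := iota) 0 t (by simp [ht])) :=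
    fun t ht ht1 => irreducible_mk'_of_card_le_one hs 0 ht (by simp) (by simp) _
  exact one_mem_deltaMonoid_of_mul_eq_mul_mul (atom b hb hb1) (atom c hc hc1) (atom a ha ha1)
    (atom a ha ha1) (atom a ha ha1) (ext' (by simp) (by simpa [pow_three, mul_assoc] using h))

theorem one_mem_deltaMonoid_of_mul_eq_mul_self (hs : ∀ i, 1 ≤ s i) (hG : CardLeTwo G)
    {a b c : Tm U s} (ha : Irreducible a) (hb : Irreducible b) (hc : Irreducible c)
    (h : a * b = c * c) (hac : iota a ≠ iota c) : 1 ∈ DeltaMonoid (TBlock G U s iota) := by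
  have hba : iota b = iota a := mul_left_cancel (a := iota a) <| by
    rw [← map_mul, h, map_mul, hG.mul_self_eq_one, hG.mul_self_eq_one]
  by_cases hc1 : iota c = 1
  · exact one_mem_deltaMonoid_of_mul_eq_mul hs ha hb hc hc h
      (g := Multiplicative.toAdd (iota a)) (by rwa [Ne, toAdd_eq_zero, ← hc1]) rfl hba hc1 hc1
  · have ha1 : iota a = 1 := by
      by_contra ha1
      rw [← toAdd_eq_zero.not] at ha1 hc1
      have hac' := neg_eq_of_add_eq_zero_left (hG _ _ ha1 hc1)
      have hcc := neg_eq_of_add_eq_zero_left (hG _ _ hc1 hc1)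
      exact hac (Multiplicative.toAdd.injective (hac'.symm.trans hcc))
    exact one_mem_deltaMonoid_of_mul_eq_mul hs hc hc ha hb h.symm
      (g := Multiplicative.toAdd (iota c)) (by rwa [Ne, toAdd_eq_zero]) rfl rfl ha1 (hba ▸ ha1)

theorem one_mem_deltaMonoid_of_iota_monomial_ne (hs : ∀ i, 1 ≤ s i) (hG : CardLeTwo G)
    {ν : Fin n} {ε : U ν} (hε : iota (monomial ν ε 1) ≠ iota (monomial ν 1 1)) :
    1 ∈ DeltaMonoid (TBlock G U s iota) := by
  have atom : ∀ ζ : U ν, Irreducible (monomial (s := s) ν ζ 1) :=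
    fun ζ => irreducible_monomial ν ζ (j := ⟨0, hs ν⟩) rfl
  exact one_mem_deltaMonoid_of_mul_eq_mul_self hs hG (atom ε) (atom ε⁻¹) (atom 1)
    (by simp [monomial_mul_monomial]) hε

theorem one_mem_deltaMonoid_of_two_le_rank (hs : ∀ i, 1 ≤ s i) (hG : CardLeTwo G)
    {ν : Fin n} (hν : 2 ≤ s ν) : 1 ∈ DeltaMonoid (TBlock G U s iota) := by
  let j₀ : Fin (s ν) := ⟨0, by omega⟩
  let j₁ : Fin (s ν) := ⟨1, hν⟩
  let x : ℕ+ → ℕ+ → Tm U s := fun p r => monomial ν 1 (Function.update (fun _ => r) j₀ p)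
  have hx : ∀ p r p' r', x p r * x p' r' = x (p + p') (r + r') := fun p r p' r' => by
    simp only [x, monomial_mul_monomial, mul_one, ← Function.update_add]
    rfl
  have hx₀ : ∀ r, Irreducible (x 1 r) := fun r => irreducible_monomial ν 1 (j := j₀) (by simp)
  have hx₁ : ∀ p, Irreducible (x p 1) := fun p => irreducible_monomial ν 1 (j := j₁)
    (by simp [Function.update_of_ne (show j₁ ≠ j₀ by simp [j₀, j₁, Fin.ext_iff])])
  have hcube : iota (x 1 1) ^ 3 = iota (x 2 1) * iota (x 1 2) := by
    simp only [pow_three, ← map_mul, hx]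
    rfl
  by_cases h₁ : iota (x 1 1) = iota (x 2 1)
  · by_cases h₂ : iota (x 1 1) = iota (x 1 2)
    · have h1 : iota (x 1 1) = 1 := by
        rw [← h₁, ← h₂, pow_three] at hcube
        simpa using hcube
      exact one_mem_deltaMonoid_of_mul_eq_pow_three hs (hx₀ 1) (hx₁ 2) (hx₀ 2)
        (by simp only [pow_three, hx]; rfl) h1 (h₁ ▸ h1) (h₂ ▸ h1)
    · exact one_mem_deltaMonoid_of_mul_eq_mul_self hs hG (hx₀ 1) (hx₀ 3) (hx₀ 2)
        (by simp only [hx]; rfl) h₂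
  · exact one_mem_deltaMonoid_of_mul_eq_mul_self hs hG (hx₀ 1) (hx₁ 3) (hx₁ 2)
      (by simp only [hx]; rfl) h₁

end TBlockMonoid

section HalfFactorial

variable {G : Type*} [AddCommGroup G] {N : Type*} [CommMonoid N] {ψ : N →* FreeCM G}

lemma seqWeight_pos_of_ne_one
    (hψ : ∀ x : N, x ≠ 1 → ∃ p y g, x = p * y ∧ ψ p = Multiplicative.ofAdd {g})
    {x : N} (hx : x ≠ 1) : 0 < seqWeight (Multiplicative.toAdd (ψ x)) := by
  obtain ⟨p, y, g, rfl, hp⟩ := hψ x hx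
  simp only [map_mul, toAdd_mul, hp, toAdd_ofAdd, seqWeight_add, seqWeight_singleton]
  split_ifs <;> omega

lemma exists_mul_of_three_le_seqWeight (hG : CardLeTwo G)
    (hψ : ∀ x : N, x ≠ 1 → ∃ p y g, x = p * y ∧ ψ p = Multiplicative.ofAdd {g})
    {x : N} (hx : 3 ≤ seqWeight (Multiplicative.toAdd (ψ x))) :
    ∃ y z, x = y * z ∧ (Multiplicative.toAdd (ψ y)).sum = 0 ∧
      seqWeight (Multiplicative.toAdd (ψ y)) = 2 := by
  have ne_one : ∀ x : N, 0 < seqWeight (Multiplicative.toAdd (ψ x)) → x ≠ 1 := by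
    rintro x hx rfl
    simp at hx
  obtain ⟨p₁, x₁, g₁, rfl, hp₁⟩ := hψ x (ne_one x (by omega))
  by_cases hg₁ : g₁ = 0
  · exact ⟨p₁, x₁, rfl, by simp [hp₁, hg₁], by simp [hp₁, hg₁, seqWeight_singleton]⟩
  simp only [map_mul, toAdd_mul, hp₁, toAdd_ofAdd, seqWeight_add, seqWeight_singleton,
    if_neg hg₁] at hx
  obtain ⟨p₂, x₂, g₂, rfl, hp₂⟩ := hψ x₁ (ne_one x₁ (by omega))
  by_cases hg₂ : g₂ = 0
  · exact ⟨p₂, p₁ * x₂, mul_left_comm _ _ _, by simp [hp₂, hg₂],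
      by simp [hp₂, hg₂, seqWeight_singleton]⟩
  · exact ⟨p₁ * p₂, x₂, (mul_assoc _ _ _).symm, by simp [hp₁, hp₂, hG _ _ hg₁ hg₂],
      by simp only [map_mul, toAdd_mul, hp₁, hp₂, toAdd_ofAdd, seqWeight_add,
        seqWeight_singleton, if_neg hg₁, if_neg hg₂]⟩

theorem deltaMonoid_mker_eq_empty (hG : CardLeTwo G)
    (hψ : ∀ x : N, x ≠ 1 → ∃ p y g, x = p * y ∧ ψ p = Multiplicative.ofAdd {g}) :
    DeltaMonoid (MonoidHom.mker ((sigmaHom G).comp ψ)) = ∅ := by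
  set B := MonoidHom.mker ((sigmaHom G).comp ψ)
  let w : B → ℕ := fun x => seqWeight (Multiplicative.toAdd (ψ x))
  have hw : ∀ a b, w (a * b) = w a + w b := fun a b => by simp [w]
  refine deltaMonoid_eq_empty_of_weight hw two_pos fun x hx => ?_
  have heven : Even (w x) :=
    (even_seqWeight_iff hG _).2 (congrArg Multiplicative.toAdd (MonoidHom.mem_mker.1 x.2))
  have hpos : 0 < w x := seqWeight_pos_of_ne_one hψ fun h => hx.ne_one (Subtype.ext h)
  have hlt : w x < 3 := by
    by_contra! h
    obtain ⟨y, z, hyz, hy0, hy2⟩ := exists_mul_of_three_le_seqWeight hG hψ h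
    have hyB : y ∈ B := MonoidHom.mem_mker.2 (congrArg Multiplicative.ofAdd hy0)
    have hzB : z ∈ B := by
      have hx1 := MonoidHom.mem_mker.1 x.2
      rw [hyz, map_mul, MonoidHom.mem_mker.1 hyB, one_mul] at hx1
      exact MonoidHom.mem_mker.2 hx1
    have hwx : w x = 2 + w ⟨z, hzB⟩ := by simp [w, hyz, hy2]
    rcases hx.isUnit_or_isUnit (a := ⟨y, hyB⟩) (b := ⟨z, hzB⟩) (Subtype.ext hyz) with h' | h'
    · have := eq_zero_of_isUnit_of_map_mul hw h'
      simp [w, hy2] at this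
    · have := eq_zero_of_isUnit_of_map_mul hw h'
      omega
  obtain ⟨k, hk⟩ := heven
  omega

end HalfFactorial

section RankOne

variable {G : Type*} [AddCommGroup G] {n : ℕ} {U : Fin n → Type*} [∀ i, CommGroup (U i)]
  {s : Fin n → ℕ} {iota : Tm U s →* Multiplicative G}

def classSeqHom (iota : Tm U s →* Multiplicative G) : Fm G U s →* FreeCM G where
  toFun x := x.1 * Multiplicative.ofAdd (∑ i, Multiset.replicate (seminormalD.degree (x.2 i))
    (Multiplicative.toAdd (iota (monomial i 1 1))))
  map_one' := by simp
  map_mul' x y := by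
    simp only [Prod.fst_mul, Prod.snd_mul, Pi.mul_apply, seminormalD.degree_mul,
      Multiset.replicate_add, Finset.sum_add_distrib, ofAdd_add]
    ac_rfl

lemma classSeqHom_apply (x : Fm G U s) :
    classSeqHom iota x = x.1 * Multiplicative.ofAdd (∑ i, Multiset.replicate
      (seminormalD.degree (x.2 i)) (Multiplicative.toAdd (iota (monomial i 1 1)))) := rfl

lemma classSeqHom_monomial {i : Fin n} (hs : s i = 1) (ζ : U i) :
    classSeqHom iota (1, monomial i ζ 1) =
      Multiplicative.ofAdd {Multiplicative.toAdd (iota (monomial i 1 1))} := by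
  rw [classSeqHom_apply, one_mul, Finset.sum_eq_single i]
  · simp [monomial, seminormalD.degree_mk, hs]
  · intro j _ hj
    simp [monomial, Pi.mulSingle_eq_of_ne hj]
  · simp

lemma iota_mulSingle {i : Fin n} (hs : s i = 1)
    (hu : ∀ ε : U i, iota (monomial i ε 1) = iota (monomial i 1 1))
    (d : seminormalD (U i) (s i)) :
    iota (Pi.mulSingle i d) = iota (monomial i 1 1) ^ seminormalD.degree d := by
  induction h : seminormalD.degree d generalizing d with
  | zero =>
    rw [(seminormalD.degree_eq_zero_iff hs.ge).1 h, Pi.mulSingle_one, map_one, pow_zero]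
  | succ k ih =>
    have hd : d ≠ 1 := by rintro rfl; simp at h
    obtain ⟨ζ, d', rfl, hdeg⟩ := seminormalD.exists_eq_mk_one_mul hs hd
    rw [Pi.mulSingle_mul, map_mul, ← monomial, hu, ih d' (by omega), pow_succ']

lemma tblockPhi_eq_comp_classSeqHom (hs : ∀ i, s i = 1)
    (hu : ∀ i (ε : U i), iota (monomial i ε 1) = iota (monomial i 1 1)) :
    TBlockPhi G U s iota = (sigmaHom G).comp (classSeqHom iota) := by
  ext x
  change sigmaHom G x.1 * iota x.2 = sigmaHom G (x.1 * _)
  rw [map_mul]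
  congr 1
  conv_lhs => rw [← Finset.univ_prod_mulSingle x.2]
  simp only [map_prod, iota_mulSingle (hs _) (hu _)]
  change _ = Multiplicative.ofAdd (Multiset.sum _)
  simp [Multiset.sum_sum, ofAdd_sum, ofAdd_nsmul]

lemma exists_mul_classSeqHom_eq_singleton (hs : ∀ i, s i = 1) (x : Fm G U s) (hx : x ≠ 1) :
    ∃ p y g, x = p * y ∧ classSeqHom iota p = Multiplicative.ofAdd {g} := by
  by_cases h₁ : Multiplicative.toAdd x.1 = 0
  · obtain ⟨i, hi⟩ : ∃ i, x.2 i ≠ 1 := by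
      by_contra! h
      exact hx (Prod.ext (toAdd_eq_zero.1 h₁) (funext h))
    obtain ⟨ζ, d, hd, -⟩ := seminormalD.exists_eq_mk_one_mul (hs i) hi
    refine ⟨(1, monomial i ζ 1), (x.1, Function.update x.2 i d), _, ?_,
      classSeqHom_monomial (hs i) ζ⟩
    refine Prod.ext (one_mul _).symm (funext fun j => ?_)
    by_cases hj : j = i
    · subst hj
      simp [monomial, hd]
    · simp [monomial, Pi.mulSingle_eq_of_ne hj, Function.update_of_ne hj]
  · obtain ⟨g, hg⟩ := Multiset.exists_mem_of_ne_zero h₁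
    obtain ⟨S, hS⟩ := Multiset.exists_cons_of_mem hg
    refine ⟨(Multiplicative.ofAdd {g}, 1), (Multiplicative.ofAdd S, x.2), g, ?_, ?_⟩
    · exact Prod.ext (congrArg Multiplicative.ofAdd hS) (one_mul _).symm
    · simp [classSeqHom_apply]

theorem deltaMonoid_eq_empty_of_forall_rank_eq_one (hs : ∀ i, s i = 1) (hG : CardLeTwo G)
    (hu : ∀ i (ε : U i), iota (monomial i ε 1) = iota (monomial i 1 1)) :
    DeltaMonoid (TBlock G U s iota) = ∅ := by
  rw [TBlock, tblockPhi_eq_comp_classSeqHom hs hu]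
  exact deltaMonoid_mker_eq_empty hG (exists_mul_classSeqHom_eq_singleton hs)

end RankOne

theorem tblock_delta_empty_or_min_one_general
    {G : Type*} [AddCommGroup G]
    {n : ℕ} (U : Fin n → Type*) [∀ i, CommGroup (U i)]
    (s : Fin n → ℕ) (hs : ∀ i, 1 ≤ s i)
    (iota : Tm U s →* Multiplicative G) :
    DeltaMonoid ↥(TBlock G U s iota) = ∅ ∨
      sInf (DeltaMonoid ↥(TBlock G U s iota)) = 1 := by
  by_cases hG : CardLeTwo G
  swap
  · simp only [CardLeTwo, not_forall] at hG
    obtain ⟨g, h, hg, hh, hgh⟩ := hG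
    exact Or.inr (sInf_deltaMonoid_eq_one_of_one_mem
      (one_mem_deltaMonoid_of_add_ne_zero hs hg hh hgh))
  by_cases hrank : ∃ ν, 2 ≤ s ν
  · obtain ⟨ν, hν⟩ := hrank
    exact Or.inr (sInf_deltaMonoid_eq_one_of_one_mem (one_mem_deltaMonoid_of_two_le_rank hs hG hν))
  by_cases hunit : ∃ ν, ∃ ε : U ν, iota (monomial ν ε 1) ≠ iota (monomial ν 1 1)
  · obtain ⟨ν, ε, hε⟩ := hunit
    exact Or.inr (sInf_deltaMonoid_eq_one_of_one_mem
      (one_mem_deltaMonoid_of_iota_monomial_ne hs hG hε))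
  simp only [not_exists, not_le, ne_eq, not_not] at hrank hunit
  refine Or.inl (deltaMonoid_eq_empty_of_forall_rank_eq_one (fun i => ?_) hG hunit)
  linarith [hs i, hrank i]

/-- Theorem 1.1 (for T-block monoids, Setting (S)): either `Δ(B) = ∅` or
`min Δ(B) = 1`. -/
theorem tblock_delta_empty_or_min_one
    {G : Type*} [AddCommGroup G] [Fintype G] (hG : 1 < Fintype.card G)
    {n : ℕ} (hn : 0 < n) (U : Fin n → Type*) [∀ i, CommGroup (U i)]
    (s : Fin n → ℕ) (hs : ∀ i, 1 ≤ s i)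
    (iota : Tm U s →* Multiplicative G) :
    DeltaMonoid ↥(TBlock G U s iota) = ∅ ∨
      sInf (DeltaMonoid ↥(TBlock G U s iota)) = 1 :=
  tblock_delta_empty_or_min_one_general U s hs iota

end
end ArXivSeminormal
end
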